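/- Let R be symmetric positive definite n×n, J skew-symmetric m×m, and R̄ symmetric positive definite m×m. Then the block-diagonal matrix P = diag([[0, I], [-I, -R]], J - R̄) of size (2n+m)×(2n+m) is Hurwitz. -/

import Mathlib

open Matrix

/-- A real square matrix is Hurwitz if all of its complex eigenvalues
have strictly negative real part. -/
def IsHurwitz {m : Type*} [Fintype m] [DecidableEq m] (A : Matrix m m ℝ) : Prop :=
  ∀ μ : ℂ, μ ∈ spectrum ℂ (A.map (Complex.ofReal)) → μ.re < 0

lemma exists_eigenvec {ι : Type*} [Fintype ι] [DecidableEq ι] (M : Matrix ι ι ℂ) {μ : ℂ}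
    (h : μ ∈ spectrum ℂ M) : ∃ v : ι → ℂ, v ≠ 0 ∧ M.mulVec v = μ • v := by
  have h' : μ ∈ spectrum ℂ (Matrix.toLinAlgEquiv' M) := by
    rwa [AlgEquiv.spectrum_eq]
  obtain ⟨v, hv⟩ := (Module.End.hasEigenvalue_iff_mem_spectrum.mpr h').exists_hasEigenvector
  exact ⟨v, hv.right, by simpa [Matrix.toLinAlgEquiv'_apply] using hv.apply_eq_smul⟩

lemma re_quad {ι : Type*} [Fintype ι] (A : Matrix ι ι ℝ) (w : ι → ℂ) :
    (star w ⬝ᵥ (A.map Complex.ofReal).mulVec w).re =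
      (fun i => (w i).re) ⬝ᵥ A.mulVec (fun i => (w i).re)
      + (fun i => (w i).im) ⬝ᵥ A.mulVec (fun i => (w i).im) := by
  simp only [dotProduct, mulVec, Pi.star_apply, Complex.star_def, map_apply,
    Finset.mul_sum, Complex.re_sum]
  rw [← Finset.sum_add_distrib]
  refine Finset.sum_congr rfl fun i _ => ?_
  rw [← Finset.sum_add_distrib]
  refine Finset.sum_congr rfl fun j _ => ?_
  simp only [Complex.mul_re, Complex.mul_im, Complex.ofReal_re, Complex.ofReal_im, Complex.conj_re, Complex.conj_im]
  ring

lemma im_quad {ι : Type*} [Fintype ι] (A : Matrix ι ι ℝ) (w : ι → ℂ) :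
    (star w ⬝ᵥ (A.map Complex.ofReal).mulVec w).im =
      (fun i => (w i).re) ⬝ᵥ A.mulVec (fun i => (w i).im)
      - (fun i => (w i).im) ⬝ᵥ A.mulVec (fun i => (w i).re) := by
  simp only [dotProduct, mulVec, Pi.star_apply, Complex.star_def, map_apply,
    Finset.mul_sum, Complex.im_sum]
  rw [← Finset.sum_sub_distrib]
  refine Finset.sum_congr rfl fun i _ => ?_
  rw [← Finset.sum_sub_distrib]
  refine Finset.sum_congr rfl fun j _ => ?_
  simp only [Complex.mul_re, Complex.mul_im, Complex.ofReal_re, Complex.ofReal_im, Complex.conj_re, Complex.conj_im]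
  ring


lemma symm_dot {ι : Type*} [Fintype ι] {A : Matrix ι ι ℝ} (hA : Aᵀ = A) (p q : ι → ℝ) :
    p ⬝ᵥ A *ᵥ q = q ⬝ᵥ A *ᵥ p := by
  rw [dotProduct_mulVec, ← Matrix.mulVec_transpose, hA, dotProduct_comm]

lemma skew_dot {ι : Type*} [Fintype ι] {A : Matrix ι ι ℝ} (hA : Aᵀ = -A) (p : ι → ℝ) :
    p ⬝ᵥ A *ᵥ p = 0 := by
  have h : p ⬝ᵥ A *ᵥ p = -(p ⬝ᵥ A *ᵥ p) := by
    conv_lhs => rw [dotProduct_mulVec, ← Matrix.mulVec_transpose, hA, Matrix.neg_mulVec,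
      neg_dotProduct, dotProduct_comm]
  linarith

lemma pos_quad {ι : Type*} [Fintype ι] {A : Matrix ι ι ℝ} (hA : A.PosDef) {a b : ι → ℝ}
    (h : a ≠ 0 ∨ b ≠ 0) : 0 < a ⬝ᵥ A *ᵥ a + b ⬝ᵥ A *ᵥ b := by
  have h1 : ∀ x : ι → ℝ, 0 ≤ x ⬝ᵥ A *ᵥ x := fun x => by simpa using hA.posSemidef.dotProduct_mulVec_nonneg x
  have h2 : ∀ x : ι → ℝ, x ≠ 0 → 0 < x ⬝ᵥ A *ᵥ x := fun x hx => by simpa using hA.dotProduct_mulVec_pos hx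
  rcases h with h | h
  · linarith [h2 a h, h1 b]
  · linarith [h1 a, h2 b h]

lemma dot_star_self {ι : Type*} [Fintype ι] (x : ι → ℂ) :
    star x ⬝ᵥ x = ((∑ i, Complex.normSq (x i) : ℝ) : ℂ) := by
  push_cast
  simp [dotProduct, Complex.normSq_eq_conj_mul_self]

lemma sum_normSq_pos {ι : Type*} [Fintype ι] {x : ι → ℂ} (hx : x ≠ 0) :
    0 < ∑ i, Complex.normSq (x i) := by
  obtain ⟨i, hi⟩ := Function.ne_iff.mp hx
  exact Finset.sum_pos' (fun j _ => Complex.normSq_nonneg _)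
    ⟨i, Finset.mem_univ i, Complex.normSq_pos.mpr hi⟩

lemma ne_zero_parts {ι : Type*} {x : ι → ℂ} (hx : x ≠ 0) :
    (fun i => (x i).re) ≠ 0 ∨ (fun i => (x i).im) ≠ 0 := by
  by_contra h
  push_neg at h
  exact hx (funext fun i => Complex.ext (congrFun h.1 i) (congrFun h.2 i))

lemma symm_quad_im {ι : Type*} [Fintype ι] {A : Matrix ι ι ℝ} (hA : Aᵀ = A) (x : ι → ℂ) :
    (star x ⬝ᵥ (A.map Complex.ofReal) *ᵥ x).im = 0 := by
  rw [im_quad, symm_dot hA, sub_self]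

lemma skew_quad_re {ι : Type*} [Fintype ι] {A : Matrix ι ι ℝ} (hA : Aᵀ = -A) (x : ι → ℂ) :
    (star x ⬝ᵥ (A.map Complex.ofReal) *ᵥ x).re = 0 := by
  rw [re_quad, skew_dot hA, skew_dot hA, add_zero]

theorem target_dynamics_matrix_hurwitz {n m : ℕ}
    (R : Matrix (Fin n) (Fin n) ℝ) (hRsym : R.IsSymm) (hR : R.PosDef)
    (J Rb : Matrix (Fin m) (Fin m) ℝ) (hJ : Jᵀ = -J)
    (hRb_sym : Rb.IsSymm) (hRb : Rb.PosDef) :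
    IsHurwitz (Matrix.fromBlocks
      (Matrix.fromBlocks (0 : Matrix (Fin n) (Fin n) ℝ) (1 : Matrix (Fin n) (Fin n) ℝ)
        (-1 : Matrix (Fin n) (Fin n) ℝ) (-R)) 0 0 (J - Rb)) := by
  intro μ hμ
  set M1 : Matrix (Fin n ⊕ Fin n) (Fin n ⊕ Fin n) ℝ := Matrix.fromBlocks 0 1 (-1) (-R) with hM1
  rw [show (Matrix.fromBlocks M1 0 0 (J - Rb)).map Complex.ofReal
      = Matrix.fromBlocks (M1.map Complex.ofReal) 0 0 ((J - Rb).map Complex.ofReal) by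
    rw [Matrix.fromBlocks_map]; congr 1 <;> simp] at hμ
  obtain ⟨v, hv0, hveq⟩ := exists_eigenvec _ hμ
  set u : Fin n ⊕ Fin n → ℂ := v ∘ Sum.inl with hu_def
  set w : Fin m → ℂ := v ∘ Sum.inr with hw_def
  rw [Matrix.fromBlocks_mulVec] at hveq
  have hu : (M1.map Complex.ofReal) *ᵥ u = μ • u := by
    funext i
    have := congrFun hveq (Sum.inl i)
    simpa [hu_def] using this
  have hw : ((J - Rb).map Complex.ofReal) *ᵥ w = μ • w := by
    funext i
    have := congrFun hveq (Sum.inr i)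
    simpa [hw_def] using this
  by_cases hw0 : w = 0
  · -- the eigenvector lives in the first block
    have hu0 : u ≠ 0 := by
      intro h
      apply hv0
      funext i
      cases i with
      | inl i => exact congrFun h i
      | inr i => exact congrFun hw0 i
    -- split u into x, y
    set x : Fin n → ℂ := u ∘ Sum.inl with hx_def
    set y : Fin n → ℂ := u ∘ Sum.inr with hy_def
    rw [show M1.map Complex.ofReal
        = Matrix.fromBlocks 0 1 (-1) (-(R.map Complex.ofReal)) by
      rw [hM1, Matrix.fromBlocks_map]
      ext i j
      cases i <;> cases j <;>
        simp [Matrix.fromBlocks, Matrix.map_apply, Matrix.one_apply, apply_ite,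
          Matrix.neg_apply]] at hu
    rw [Matrix.fromBlocks_mulVec] at hu
    have h1 : y = μ • x := by
      funext i
      have := congrFun hu (Sum.inl i)
      simpa [hx_def, hy_def] using this
    have h2 : -x - (R.map Complex.ofReal) *ᵥ y = μ • y := by
      funext i
      have := congrFun hu (Sum.inr i)
      simpa [Matrix.neg_mulVec, sub_eq_add_neg, hx_def, hy_def] using this
    by_cases hμ0 : μ = 0
    · subst hμ0
      simp only [zero_smul] at h1 h2
      rw [h1] at h2
      simp only [Matrix.mulVec_zero, sub_zero] at h2
      have hx0 : x = 0 := neg_eq_zero.mp h2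
      refine absurd (funext fun i => ?_ : u = 0) hu0
      cases i with
      | inl i => exact congrFun hx0 i
      | inr i => exact congrFun h1 i
    · have hx0 : x ≠ 0 := by
        intro h
        apply hu0
        funext i
        cases i with
        | inl i => exact congrFun h i
        | inr i =>
          show y i = 0
          rw [h1, h]; simp
      rw [h1, Matrix.mulVec_smul] at h2
      -- dot with star x
      have hq : -(star x ⬝ᵥ x) - μ * (star x ⬝ᵥ (R.map Complex.ofReal) *ᵥ x)
          = μ * (μ * (star x ⬝ᵥ x)) := by
        have := congrArg (fun z => star x ⬝ᵥ z) h2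
        simpa [dotProduct_sub, dotProduct_neg, dotProduct_smul, smul_eq_mul, mul_assoc]
          using this
      set r : ℂ := star x ⬝ᵥ (R.map Complex.ofReal) *ᵥ x with hr_def
      have hrim : r.im = 0 := symm_quad_im hRsym x
      have hrre : 0 < r.re := by
        rw [hr_def, re_quad]
        exact pos_quad hR (ne_zero_parts hx0)
      have hc : star x ⬝ᵥ x = ((∑ i, Complex.normSq (x i) : ℝ) : ℂ) := dot_star_self x
      set s : ℝ := ∑ i, Complex.normSq (x i) with hs_def
      have hs : 0 < s := sum_normSq_pos hx0
      rw [hc] at hq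
      have hre := congrArg Complex.re hq
      have him := congrArg Complex.im hq
      simp only [Complex.sub_re, Complex.neg_re, Complex.mul_re, Complex.mul_im,
        Complex.sub_im, Complex.neg_im, Complex.ofReal_re, Complex.ofReal_im,
        hrim] at hre him
      by_contra hcon
      push_neg at hcon
      have hβ : μ.im * (2 * μ.re * s + r.re) = 0 := by linear_combination (-1 : ℝ) * him
      by_cases hβ0 : μ.im = 0
      · rw [hβ0] at hre
        nlinarith [mul_nonneg hcon hrre.le, mul_nonneg (mul_nonneg hcon hcon) hs.le]
      · have h0 : 2 * μ.re * s + r.re = 0 :=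
          (mul_eq_zero.mp hβ).resolve_left hβ0
        nlinarith [mul_nonneg hcon hs.le]
  · -- eigenvector in the second block
    have hdot : star w ⬝ᵥ ((J - Rb).map Complex.ofReal) *ᵥ w = μ * (star w ⬝ᵥ w) := by
      rw [hw, dotProduct_smul, smul_eq_mul]
    have hre := congrArg Complex.re hdot
    rw [show (J - Rb).map Complex.ofReal
        = J.map Complex.ofReal - Rb.map Complex.ofReal by simp [Matrix.map_sub]] at hre
    rw [Matrix.sub_mulVec, dotProduct_sub, Complex.sub_re, skew_quad_re hJ] at hre
    have hrbre : 0 < (star w ⬝ᵥ (Rb.map Complex.ofReal) *ᵥ w).re := by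
      rw [re_quad]
      exact pos_quad hRb (ne_zero_parts hw0)
    rw [dot_star_self] at hre
    have hs : 0 < ∑ i, Complex.normSq (w i) := sum_normSq_pos hw0
    have := hre
    simp only [Complex.mul_re, Complex.ofReal_re, Complex.ofReal_im, mul_zero,
      sub_zero, zero_sub] at this
    nlinarith [mul_pos hs hrbre]
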